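/- Let K ≤ 0, T > 0, and suppose μ : ℝ^N → ℝ is measurable with μ(ξ) ≥ K a.e. Let u₀ with ∫(1+|μ(ξ)|)|û₀(ξ)|² dξ < ∞ and f with ∫₀^T ∫ |f̂(s,ξ)|² dξ ds < ∞. Define û(t,ξ) := e^{−μ(ξ)t}(û₀(ξ) + ∫₀^t e^{μ(ξ)s} f̂(s,ξ) ds). Then sup_{t∈[0,T]} ∫ (1+|μ(ξ)|)|û(t,ξ)|² dξ ≤ 2(1−K)(T+1)e^{−2KT} (∫(1+|μ|)|û₀|² dξ + ∫₀^T ∫|f̂(s,ξ)|² dξ ds). -/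

import Mathlib

/-!
Fix ξ and write m = μ(ξ). Duhamel's formula gives
|û(t)| ≤ e^{-mt}|û₀| + ∫₀^t e^{-m(t-s)}|f̂(s)| ds, so by Cauchy–Schwarz
(1+|m|)|û(t)|² ≤ 2e^{-2mt}(1+|m|)|û₀|² + 2(1+|m|)(∫₀^t e^{-2m(t-s)} ds)(∫₀^t |f̂(s)|² ds).
Both weights are at most (1-K)(T+1)e^{-2KT}: for m < 0 because |m| ≤ -K and e^{-2mr} ≤ e^{-2KT}
on [0,T], for m ≥ 0 because m∫₀^t e^{-2m(t-s)} ds = (1 - e^{-2mt})/2 ≤ 1/2.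
Integrating in ξ and exchanging the order of integration in the forcing term gives the estimate.
-/

open MeasureTheory Set Real
open scoped ENNReal

lemma exp_neg_two_mul_le_exp_neg_two_mul {K T m r : ℝ} (hK : K ≤ 0) (hm : K ≤ m)
    (hr : 0 ≤ r) (hrT : r ≤ T) : exp (-2 * m * r) ≤ exp (-2 * K * T) :=
  exp_le_exp.2 (by nlinarith)

lemma integral_mul_exp_neg_two_mul_sub (m t : ℝ) :
    ∫ s in (0 : ℝ)..t, m * exp (-2 * m * (t - s)) = (1 - exp (-2 * m * t)) / 2 := by
  have hderiv : ∀ s, HasDerivAt (fun s => exp (-2 * m * (t - s)) / 2)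
      (m * exp (-2 * m * (t - s))) s := by
    intro s
    exact ((((hasDerivAt_id' s).const_sub t).const_mul (-2 * m)).exp.div_const 2).congr_deriv
      (by ring)
  rw [intervalIntegral.integral_eq_sub_of_hasDerivAt (fun s _ => hderiv s)
    (by apply Continuous.intervalIntegrable; fun_prop)]
  simp only [sub_self, mul_zero, exp_zero, sub_zero]
  ring

lemma one_add_abs_mul_integral_exp_le {K T m t : ℝ} (hK : K ≤ 0) (hm : K ≤ m)
    (ht : 0 ≤ t) (htT : t ≤ T) :
    (1 + |m|) * ∫ s in (0 : ℝ)..t, exp (-2 * m * (t - s)) ≤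
      (1 - K) * (T + 1) * exp (-2 * K * T) := by
  set e := exp (-2 * K * T)
  have he : 1 ≤ e := one_le_exp (by nlinarith)
  have hL : ∫ s in (0 : ℝ)..t, exp (-2 * m * (t - s)) ≤ t * e := by
    calc ∫ s in (0 : ℝ)..t, exp (-2 * m * (t - s)) ≤ ∫ _ in (0 : ℝ)..t, e :=
          intervalIntegral.integral_mono_on ht (by apply Continuous.intervalIntegrable; fun_prop)
            intervalIntegrable_const fun s hs =>
              exp_neg_two_mul_le_exp_neg_two_mul hK hm (by linarith [hs.2]) (by linarith [hs.1])
      _ = t * e := by simp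
  have hL0 : 0 ≤ ∫ s in (0 : ℝ)..t, exp (-2 * m * (t - s)) :=
    intervalIntegral.integral_nonneg ht fun s _ => (exp_pos _).le
  rcases lt_or_ge m 0 with hm0 | hm0
  · have : 1 + |m| ≤ 1 - K := by rw [abs_of_neg hm0]; linarith
    calc (1 + |m|) * ∫ s in (0 : ℝ)..t, exp (-2 * m * (t - s)) ≤ (1 - K) * (t * e) :=
          mul_le_mul this hL hL0 (by linarith)
      _ ≤ (1 - K) * (T + 1) * e := by
          nlinarith [mul_nonneg (mul_nonneg (by linarith : (0 : ℝ) ≤ 1 - K) (by linarith : 0 ≤ e))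
            (by linarith : 0 ≤ T + 1 - t)]
  · have hmL : m * ∫ s in (0 : ℝ)..t, exp (-2 * m * (t - s)) ≤ 1 / 2 := by
      rw [← intervalIntegral.integral_const_mul, integral_mul_exp_neg_two_mul_sub]
      linarith [exp_pos (-2 * m * t)]
    calc (1 + |m|) * ∫ s in (0 : ℝ)..t, exp (-2 * m * (t - s))
        = (∫ s in (0 : ℝ)..t, exp (-2 * m * (t - s))) +
            m * ∫ s in (0 : ℝ)..t, exp (-2 * m * (t - s)) := by rw [abs_of_nonneg hm0]; ring
      _ ≤ (T + 1) * e := by nlinarith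
      _ ≤ (1 - K) * (T + 1) * e := by
          nlinarith [mul_nonneg (by linarith : 0 ≤ -K) (by nlinarith : 0 ≤ (T + 1) * e)]

lemma ENNReal.add_sq_le (a b : ℝ≥0∞) : (a + b) ^ 2 ≤ 2 * (a ^ 2 + b ^ 2) := by
  have := ENNReal.rpow_add_le_mul_rpow_add_rpow a b one_le_two
  norm_num [ENNReal.rpow_two] at this
  exact this

lemma lintegral_mul_sq_le {α : Type*} [MeasurableSpace α] (μ : Measure α) {g h : α → ℝ≥0∞}
    (hg : AEMeasurable g μ) (hh : AEMeasurable h μ) :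
    (∫⁻ x, g x * h x ∂μ) ^ 2 ≤ (∫⁻ x, g x ^ 2 ∂μ) * ∫⁻ x, h x ^ 2 ∂μ := by
  have := ENNReal.lintegral_mul_le_Lp_mul_Lq μ Real.HolderConjugate.two_two hg hh
  calc (∫⁻ x, g x * h x ∂μ) ^ 2
      ≤ ((∫⁻ x, g x ^ (2 : ℝ) ∂μ) ^ (1 / 2 : ℝ) * (∫⁻ x, h x ^ (2 : ℝ) ∂μ) ^ (1 / 2 : ℝ)) ^ 2 :=
        pow_le_pow_left' this 2
    _ = (∫⁻ x, g x ^ 2 ∂μ) * ∫⁻ x, h x ^ 2 ∂μ := by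
        rw [mul_pow, ← ENNReal.rpow_natCast, ← ENNReal.rpow_natCast, ← ENNReal.rpow_mul,
          ← ENNReal.rpow_mul]
        norm_num

lemma enorm_ofReal_exp (x : ℝ) : ‖(exp x : ℂ)‖ₑ = ENNReal.ofReal (exp x) := by
  rw [← ofReal_norm, Complex.norm_real, norm_of_nonneg (exp_pos x).le]

lemma enorm_duhamel_le {m t : ℝ} (ht : 0 ≤ t) (b : ℂ) (h : ℝ → ℂ) :
    ‖(exp (-m * t) : ℂ) * (b + ∫ s in (0 : ℝ)..t, (exp (m * s) : ℂ) * h s)‖ₑ ≤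
      ENNReal.ofReal (exp (-m * t)) * ‖b‖ₑ +
        ∫⁻ s in Ioc 0 t, ENNReal.ofReal (exp (-m * (t - s))) * ‖h s‖ₑ := by
  have hkernel : (exp (-m * t) : ℂ) * ∫ s in (0 : ℝ)..t, (exp (m * s) : ℂ) * h s =
      ∫ s in (0 : ℝ)..t, (exp (-m * (t - s)) : ℂ) * h s := by
    rw [← intervalIntegral.integral_const_mul]
    congr 1 with s
    rw [← mul_assoc, ← Complex.ofReal_mul, ← exp_add]
    ring_nf
  rw [mul_add, hkernel, intervalIntegral.integral_of_le ht]
  refine (enorm_add_le _ _).trans (add_le_add ?_ ?_)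
  · rw [enorm_mul, enorm_ofReal_exp]
  · refine (enorm_integral_le_lintegral_enorm _).trans_eq ?_
    simp only [enorm_mul, enorm_ofReal_exp]

lemma lintegral_ofReal_exp_sq {m t : ℝ} (ht : 0 ≤ t) :
    ∫⁻ s in Ioc 0 t, ENNReal.ofReal (exp (-m * (t - s))) ^ 2 =
      ENNReal.ofReal (∫ s in (0 : ℝ)..t, exp (-2 * m * (t - s))) := by
  rw [intervalIntegral.integral_of_le ht, ofReal_integral_eq_lintegral_ofReal
    (Continuous.integrableOn_Ioc (by fun_prop)) (.of_forall fun s => (exp_pos _).le)]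
  congr 1 with s
  rw [← ENNReal.ofReal_pow (exp_pos _).le, ← exp_nat_mul]
  ring_nf

lemma ofReal_weight_mul_norm_duhamel_sq_le {K T m t : ℝ} (hK : K ≤ 0) (hm : K ≤ m)
    (ht : 0 ≤ t) (htT : t ≤ T) (b : ℂ) {h : ℝ → ℂ}
    (hh : AEMeasurable h (volume.restrict (Ioc 0 t))) :
    ENNReal.ofReal ((1 + |m|) *
        ‖(exp (-m * t) : ℂ) * (b + ∫ s in (0 : ℝ)..t, (exp (m * s) : ℂ) * h s)‖ ^ 2) ≤
      ENNReal.ofReal (2 * (1 - K) * (T + 1) * exp (-2 * K * T)) *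
        (ENNReal.ofReal ((1 + |m|) * ‖b‖ ^ 2) + ∫⁻ s in Ioc 0 t, ENNReal.ofReal (‖h s‖ ^ 2)) := by
  set w := (exp (-m * t) : ℂ) * (b + ∫ s in (0 : ℝ)..t, (exp (m * s) : ℂ) * h s)
  set ρ := ENNReal.ofReal (1 + |m|)
  set E := ENNReal.ofReal (exp (-m * t))
  set c := ENNReal.ofReal ((1 - K) * (T + 1) * exp (-2 * K * T))
  set I := ∫⁻ s in Ioc 0 t, ENNReal.ofReal (exp (-m * (t - s))) * ‖h s‖ₑ
  set J := ∫⁻ s in Ioc 0 t, ENNReal.ofReal (exp (-m * (t - s))) ^ 2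
  set F := ∫⁻ s in Ioc 0 t, ‖h s‖ₑ ^ 2
  have hρ : 0 ≤ 1 + |m| := by positivity
  have hweight : ∀ z : ℂ, ENNReal.ofReal ((1 + |m|) * ‖z‖ ^ 2) = ρ * ‖z‖ₑ ^ 2 := fun z => by
    rw [ENNReal.ofReal_mul hρ, ENNReal.ofReal_pow (norm_nonneg _), ofReal_norm]
  have hconst : ENNReal.ofReal (2 * (1 - K) * (T + 1) * exp (-2 * K * T)) = 2 * c := by
    rw [mul_assoc, mul_assoc, ← mul_assoc (1 - K), ENNReal.ofReal_mul zero_le_two,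
      ENNReal.ofReal_ofNat]
  have hF : ∫⁻ s in Ioc 0 t, ENNReal.ofReal (‖h s‖ ^ 2) = F :=
    lintegral_congr fun s => by rw [ENNReal.ofReal_pow (norm_nonneg _), ofReal_norm]
  have hw : ‖w‖ₑ ≤ E * ‖b‖ₑ + I := enorm_duhamel_le ht b h
  have hCS : I ^ 2 ≤ J * F :=
    lintegral_mul_sq_le _ (by fun_prop) hh.enorm
  have hE : E ^ 2 ≤ c := by
    have he : 1 ≤ (1 - K) * (T + 1) := by nlinarith
    rw [← ENNReal.ofReal_pow (exp_pos _).le, ← exp_nat_mul]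
    refine ENNReal.ofReal_le_ofReal ?_
    calc exp (((2 : ℕ) : ℝ) * (-m * t)) = exp (-2 * m * t) := by push_cast; ring_nf
      _ ≤ exp (-2 * K * T) := exp_neg_two_mul_le_exp_neg_two_mul hK hm ht htT
      _ ≤ (1 - K) * (T + 1) * exp (-2 * K * T) := le_mul_of_one_le_left (exp_pos _).le he
  have hJ : ρ * J ≤ c := by
    rw [show J = _ from lintegral_ofReal_exp_sq ht, ← ENNReal.ofReal_mul hρ]
    exact ENNReal.ofReal_le_ofReal (one_add_abs_mul_integral_exp_le hK hm ht htT)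
  rw [hweight, hweight, hconst, hF]
  calc ρ * ‖w‖ₑ ^ 2 ≤ ρ * (E * ‖b‖ₑ + I) ^ 2 := by gcongr
    _ ≤ ρ * (2 * ((E * ‖b‖ₑ) ^ 2 + I ^ 2)) := by gcongr; exact ENNReal.add_sq_le _ _
    _ = 2 * (E ^ 2 * (ρ * ‖b‖ₑ ^ 2) + ρ * I ^ 2) := by ring
    _ ≤ 2 * (c * (ρ * ‖b‖ₑ ^ 2) + ρ * J * F) := by rw [mul_assoc ρ J]; gcongr
    _ ≤ 2 * (c * (ρ * ‖b‖ₑ ^ 2) + c * F) := by gcongr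
    _ = 2 * c * (ρ * ‖b‖ₑ ^ 2 + F) := by ring

theorem stmt15_general (N : ℕ) (K T : ℝ) (hK : K ≤ 0)
    (μ : (Fin N → ℝ) → ℝ) (hμmeas : Measurable μ)
    (hμK : ∀ᵐ ξ : Fin N → ℝ, K ≤ μ ξ)
    (u₀ : (Fin N → ℝ) → ℂ) (hu₀meas : Measurable u₀)
    (f : ℝ → (Fin N → ℝ) → ℂ) (hfmeas : Measurable (Function.uncurry f))
    (u : ℝ → (Fin N → ℝ) → ℂ)
    (hu : ∀ t ξ, u t ξ = Real.exp (-μ ξ * t) *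
        (u₀ ξ + ∫ s in (0 : ℝ)..t, (Real.exp (μ ξ * s) : ℂ) * f s ξ)) :
    ∀ t ∈ Set.Icc (0 : ℝ) T,
      ∫⁻ ξ, ENNReal.ofReal ((1 + |μ ξ|) * ‖u t ξ‖ ^ 2) ≤
        ENNReal.ofReal (2 * (1 - K) * (T + 1) * Real.exp (-2 * K * T)) *
          ((∫⁻ ξ, ENNReal.ofReal ((1 + |μ ξ|) * ‖u₀ ξ‖ ^ 2)) +
            ∫⁻ s in Set.Ioc (0 : ℝ) T, ∫⁻ ξ, ENNReal.ofReal (‖f s ξ‖ ^ 2)) := by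
  rintro t ⟨ht, htT⟩
  have hpointwise : ∀ᵐ ξ : Fin N → ℝ, ENNReal.ofReal ((1 + |μ ξ|) * ‖u t ξ‖ ^ 2) ≤
      ENNReal.ofReal (2 * (1 - K) * (T + 1) * Real.exp (-2 * K * T)) *
        (ENNReal.ofReal ((1 + |μ ξ|) * ‖u₀ ξ‖ ^ 2) +
          ∫⁻ s in Ioc 0 t, ENNReal.ofReal (‖f s ξ‖ ^ 2)) := by
    filter_upwards [hμK] with ξ hξ
    rw [hu]
    exact ofReal_weight_mul_norm_duhamel_sq_le hK hξ ht htT (u₀ ξ)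
      (hfmeas.comp (measurable_id.prodMk measurable_const)).aemeasurable
  refine (lintegral_mono_ae hpointwise).trans ?_
  rw [lintegral_const_mul' _ _ ENNReal.ofReal_ne_top, lintegral_add_left (by fun_prop),
    lintegral_lintegral_swap (by fun_prop)]
  gcongr

/-- A priori `V_𝓛` estimate on the Fourier side: if the symbol `μ ≥ K` a.e. with
`K ≤ 0`, `û₀` has finite `V_𝓛` norm and `f̂ ∈ L²((0,T)×ℝ^N)`, then the solution
`û(t,ξ) = e^{−μ(ξ)t}(û₀(ξ) + ∫₀^t e^{μ(ξ)s} f̂(s,ξ) ds)` satisfies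
`sup_{t∈[0,T]} ∫ (1+|μ|)|û(t)|² ≤ 2(1−K)(T+1)e^{−2KT}(∫(1+|μ|)|û₀|² + ∫₀^T∫|f̂|²)`. -/
theorem stmt15 (N : ℕ) (K T : ℝ) (hK : K ≤ 0) (hT : 0 < T)
    (μ : (Fin N → ℝ) → ℝ) (hμmeas : Measurable μ)
    (hμK : ∀ᵐ ξ : Fin N → ℝ, K ≤ μ ξ)
    (u₀ : (Fin N → ℝ) → ℂ) (hu₀meas : Measurable u₀)
    (f : ℝ → (Fin N → ℝ) → ℂ) (hfmeas : Measurable (Function.uncurry f))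
    (hu₀ : ∫⁻ ξ, ENNReal.ofReal ((1 + |μ ξ|) * ‖u₀ ξ‖ ^ 2) < ⊤)
    (hf : ∫⁻ s in Set.Ioc (0 : ℝ) T, ∫⁻ ξ, ENNReal.ofReal (‖f s ξ‖ ^ 2) < ⊤)
    (u : ℝ → (Fin N → ℝ) → ℂ)
    (hu : ∀ t ξ, u t ξ = Real.exp (-μ ξ * t) *
        (u₀ ξ + ∫ s in (0 : ℝ)..t, (Real.exp (μ ξ * s) : ℂ) * f s ξ)) :
    ∀ t ∈ Set.Icc (0 : ℝ) T,
      ∫⁻ ξ, ENNReal.ofReal ((1 + |μ ξ|) * ‖u t ξ‖ ^ 2) ≤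
        ENNReal.ofReal (2 * (1 - K) * (T + 1) * Real.exp (-2 * K * T)) *
          ((∫⁻ ξ, ENNReal.ofReal ((1 + |μ ξ|) * ‖u₀ ξ‖ ^ 2)) +
            ∫⁻ s in Set.Ioc (0 : ℝ) T, ∫⁻ ξ, ENNReal.ofReal (‖f s ξ‖ ^ 2)) :=
  stmt15_general N K T hK μ hμmeas hμK u₀ hu₀meas f hfmeas u hu
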